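/- arXiv:1912.00355 — 2 statements merged into one kernel-verified Lean document; each statement's English description precedes it below -/
import Mathlib

section
/- Let N ∈ ℕ and let S_ε be an N×N matrix of the form S_ε = (c/ε) S₀ + R_ε where S₀ has entries (S₀)_{ii} = 2, (S₀)_{ij} = (-1)^{i+j} for i ≠ j, c > 0, and ‖R_ε‖ ≤ C e^{-a/ε} for constants C, a > 0. Then there exists ε₀ > 0 such that for 0 < ε < ε₀, S_ε is invertible and S_ε^{-1} = (ε/((N+1)c)) T₀ + R̃_ε with (T₀)_{ii} = N, (T₀)_{ij} = (-1)^{i+j+1} for i ≠ j, and ‖R̃_ε‖ ≤ C' e^{-a'/ε} for some C', a' > 0. -/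
/-!
With `v = (1, -1, 1, …)` we have `S₀ = 1 + v vᵀ`, `T₀ = (N + 1) • 1 - v vᵀ` and `v ⬝ᵥ v = N`, so
Sherman–Morrison gives `S₀⁻¹ = (N + 1)⁻¹ • T₀`. Writing `S_ε = (c / ε) • (S₀ + t_ε)` with
`t_ε = (ε / c) • R_ε`, the inverse is differentiable at the unit `S₀` of the Banach algebra of
matrices, so `(S₀ + t_ε)⁻¹ - S₀⁻¹ = O(‖t_ε‖) = O(ε e^{-a/ε})`, and multiplying by `ε / c` gives the
claim with `a' = a`.
-/

open Matrix Filter Topology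

attribute [local instance] Matrix.linftyOpSeminormedAddCommGroup Matrix.linftyOpNormedRing
  Matrix.linftyOpNormedAlgebra Matrix.linftyOpNormSMulClass

namespace Matrix

variable {m n α : Type*} [Fintype m] [Fintype n]

theorem norm_apply_le_linfty_opNorm [SeminormedAddCommGroup α] (A : Matrix m n α) (i : m)
    (j : n) : ‖A i j‖ ≤ ‖A‖ :=
  (PiLp.norm_apply_le (WithLp.toLp 1 (A i)) j).trans
    (norm_le_pi_norm (fun i => WithLp.toLp 1 (A i)) i)

theorem linfty_opNorm_le_card_mul [SeminormedAddCommGroup α] {A : Matrix m n α} {b : ℝ}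
    (hb : 0 ≤ b) (h : ∀ i j, ‖A i j‖ ≤ b) : ‖A‖ ≤ Fintype.card n * b := by
  change ‖fun i => WithLp.toLp 1 (A i)‖ ≤ _
  refine (pi_norm_le_iff_of_nonneg (by positivity)).2 fun i => ?_
  rw [PiLp.norm_eq_of_L1]
  simpa using Finset.sum_le_sum fun j (_ : j ∈ Finset.univ) => h i j

theorem one_add_vecMulVec_self_mul [CommRing α] [DecidableEq n] (v : n → α) :
    (1 + vecMulVec v v) * ((v ⬝ᵥ v + 1) • 1 - vecMulVec v v) =
      (v ⬝ᵥ v + 1) • (1 : Matrix n n α) := by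
  rw [mul_sub, add_mul, add_mul, one_mul, one_mul, Matrix.mul_smul, mul_one,
    vecMulVec_mul_vecMulVec, vecMulVec_smul]
  module

theorem isUnit_smul_and_inv_smul {K : Type*} [Field K] [DecidableEq n] {k : K} (hk : k ≠ 0)
    {B : Matrix n n K} (hB : IsUnit B) : IsUnit (k • B) ∧ (k • B)⁻¹ = k⁻¹ • B⁻¹ := by
  have h : (k • B) * (k⁻¹ • B⁻¹) = 1 := by
    rw [smul_mul_smul_comm, mul_inv_cancel₀ hk, one_smul,
      mul_nonsing_inv _ ((isUnit_iff_isUnit_det _).1 hB)]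
  exact ⟨IsUnit.of_mul_eq_one _ h, inv_eq_right_inv h⟩

end Matrix

theorem IsUnit.exists_pos_eventually_norm_inverse_add_sub_le {R : Type*} [NormedRing R]
    [CompleteSpace R] {x : R} (hx : IsUnit x) :
    ∃ K > 0, ∀ᶠ t in 𝓝 (0 : R),
      IsUnit (x + t) ∧ ‖Ring.inverse (x + t) - Ring.inverse x‖ ≤ K * ‖t‖ := by
  obtain ⟨u, rfl⟩ := hx
  have hunit : ∀ᶠ t in 𝓝 (0 : R), IsUnit ((u : R) + t) :=
    ((continuous_const.add continuous_id).tendsto' 0 (u : R) (add_zero _)).eventually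
      (Units.isOpen.mem_nhds u.isUnit)
  obtain ⟨K, hK, hO⟩ := (NormedRing.inverse_add_norm_diff_first_order u).exists_pos
  refine ⟨K, hK, hunit.and ?_⟩
  filter_upwards [hO.bound] with t ht
  simpa using ht

def altSign (N : ℕ) : Fin N → ℝ := fun i => (-1) ^ (i : ℕ)

theorem altSign_dotProduct_self (N : ℕ) : altSign N ⬝ᵥ altSign N = N := by
  simp [altSign, dotProduct, ← pow_add, ← two_mul, pow_mul]

theorem vecMulVec_altSign_apply {N : ℕ} (i j : Fin N) :
    vecMulVec (altSign N) (altSign N) i j = (-1) ^ (i.val + j.val) := by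
  simp only [vecMulVec_apply, altSign, pow_add]

theorem gram_mul_smul_eq_one {N : ℕ} {S₀ T₀ : Matrix (Fin N) (Fin N) ℝ}
    (hS₀ : ∀ i j, S₀ i j = if i = j then 2 else (-1 : ℝ) ^ (i.val + j.val))
    (hT₀ : ∀ i j, T₀ i j = if i = j then (N : ℝ) else (-1 : ℝ) ^ (i.val + j.val + 1)) :
    S₀ * (((N : ℝ) + 1)⁻¹ • T₀) = 1 := by
  have hS : S₀ = 1 + vecMulVec (altSign N) (altSign N) := by
    ext i j
    rcases eq_or_ne i j with rfl | hij
    · simp [hS₀, vecMulVec_altSign_apply, Even.neg_one_pow ⟨i.val, rfl⟩, one_add_one_eq_two]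
    · simp [hS₀, vecMulVec_altSign_apply, hij]
  have hT : T₀ = ((N : ℝ) + 1) • 1 - vecMulVec (altSign N) (altSign N) := by
    ext i j
    rcases eq_or_ne i j with rfl | hij
    · simp [hT₀, vecMulVec_altSign_apply, Even.neg_one_pow ⟨i.val, rfl⟩]
    · simp [hT₀, vecMulVec_altSign_apply, hij, pow_succ]
  rw [Matrix.mul_smul, hS, hT, ← altSign_dotProduct_self, one_add_vecMulVec_self_mul, smul_smul,
    inv_mul_cancel₀ (by rw [altSign_dotProduct_self]; positivity), one_smul]

theorem norm_div_smul_le_of_abs_le {m : Type*} [Fintype m] {c C a ε : ℝ} (hc : 0 < c)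
    (hC : 0 ≤ C) (hε : 0 < ε) {R : Matrix m m ℝ} (hR : ∀ i j, |R i j| ≤ C * Real.exp (-a / ε)) :
    ‖(ε / c) • R‖ ≤ ε / c * (Fintype.card m * (C * Real.exp (-a / ε))) := by
  rw [norm_smul, Real.norm_of_nonneg (by positivity)]
  gcongr
  exact linfty_opNorm_le_card_mul (by positivity) fun i j => (Real.norm_eq_abs _).trans_le (hR i j)

theorem tendsto_div_smul_nhdsGT_zero {m : Type*} [Fintype m] {c C a : ℝ} (hc : 0 < c)
    (hC : 0 ≤ C) (ha : 0 < a) {R : ℝ → Matrix m m ℝ}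
    (hR : ∀ ε > (0 : ℝ), ∀ i j, |R ε i j| ≤ C * Real.exp (-a / ε)) :
    Tendsto (fun ε => (ε / c) • R ε) (𝓝[>] 0) (𝓝 0) := by
  refine squeeze_zero_norm' (a := fun ε => ε / c * (Fintype.card m * C)) ?_ ?_
  · filter_upwards [self_mem_nhdsWithin] with ε (hε : 0 < ε)
    have hexp : Real.exp (-a / ε) ≤ 1 :=
      Real.exp_le_one_iff.2 (div_nonpos_of_nonpos_of_nonneg (neg_nonpos.2 ha.le) hε.le)
    refine (norm_div_smul_le_of_abs_le hc hC hε (hR ε hε)).trans ?_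
    gcongr
    exact mul_le_of_le_one_right hC hexp
  · exact tendsto_nhdsWithin_of_tendsto_nhds (Continuous.tendsto' (by fun_prop) 0 0 (by simp))

/-- Asymptotic inversion of the Gram-type matrix: if
`S_ε = (c/ε) S₀ + R_ε` with `S₀` the matrix with `2` on the diagonal and `(-1)^{i+j}`
off the diagonal, and `R_ε` exponentially small (entrywise), then for `ε` small `S_ε`
is invertible and `S_ε⁻¹ = (ε/((N+1)c)) T₀ + R̃_ε`, with `T₀` having `N` on the diagonal
and `(-1)^{i+j+1}` off the diagonal, and `R̃_ε` exponentially small (entrywise). -/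
theorem stmt12 (N : ℕ) (c C a : ℝ) (hc : 0 < c) (hC : 0 < C) (ha : 0 < a)
    (S₀ T₀ : Matrix (Fin N) (Fin N) ℝ)
    (hS₀ : ∀ i j, S₀ i j = if i = j then 2 else (-1 : ℝ) ^ (i.val + j.val))
    (hT₀ : ∀ i j, T₀ i j = if i = j then (N : ℝ) else (-1 : ℝ) ^ (i.val + j.val + 1))
    (S R : ℝ → Matrix (Fin N) (Fin N) ℝ)
    (hS : ∀ ε > (0:ℝ), S ε = (c / ε) • S₀ + R ε)
    (hR : ∀ ε > (0:ℝ), ∀ i j, |R ε i j| ≤ C * Real.exp (-a / ε)) :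
    ∃ ε₀ > 0, ∃ C' > 0, ∃ a' > 0, ∀ ε, 0 < ε → ε < ε₀ →
      IsUnit (S ε) ∧
      ∀ i j, |(S ε)⁻¹ i j - (ε / ((N + 1) * c)) * T₀ i j| ≤ C' * Real.exp (-a' / ε) := by
  have hSt : ∀ ε > 0, S ε = (c / ε) • (S₀ + (ε / c) • R ε) := fun ε hε => by
    rw [hS ε hε, smul_add, smul_smul, div_mul_div_comm, mul_comm c, div_self (by positivity),
      one_smul]
  have hS₀T₀ := gram_mul_smul_eq_one hS₀ hT₀
  obtain ⟨K, hK, hnear⟩ :=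
    (IsUnit.of_mul_eq_one _ hS₀T₀).exists_pos_eventually_norm_inverse_add_sub_le
  obtain ⟨ε₀, hε₀, hsub⟩ := mem_nhdsGT_iff_exists_Ioo_subset.1 <|
    ((tendsto_div_smul_nhdsGT_zero hc hC.le ha hR).eventually hnear).and (Ioo_mem_nhdsGT one_pos)
  refine ⟨ε₀, hε₀, K * (N + 1) * C / c ^ 2, by positivity, a, ha, fun ε hε hεε₀ => ?_⟩
  obtain ⟨⟨hunit, hbound⟩, -, hε1⟩ := hsub ⟨hε, hεε₀⟩
  rw [← nonsing_inv_eq_ringInverse, ← nonsing_inv_eq_ringInverse, inv_eq_right_inv hS₀T₀]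
    at hbound
  obtain ⟨hSunit, hSinv⟩ := isUnit_smul_and_inv_smul (div_pos hc hε).ne' hunit
  rw [← hSt ε hε, inv_div] at hSinv
  refine ⟨hSt ε hε ▸ hSunit, fun i j => ?_⟩
  calc |(S ε)⁻¹ i j - ε / ((N + 1) * c) * T₀ i j|
      = |((ε / c) • ((S₀ + (ε / c) • R ε)⁻¹ - ((N : ℝ) + 1)⁻¹ • T₀)) i j| := by
        rw [hSinv]
        simp only [Matrix.smul_apply, Matrix.sub_apply, smul_eq_mul]
        field_simp
    _ ≤ ε / c * (K * (ε / c * (N * (C * Real.exp (-a / ε))))) := by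
        refine (Real.norm_eq_abs _ ▸ norm_apply_le_linfty_opNorm _ i j).trans ?_
        rw [norm_smul, Real.norm_of_nonneg (by positivity)]
        gcongr
        exact hbound.trans (by gcongr; simpa using norm_div_smul_le_of_abs_le hc hC.le hε (hR ε hε))
    _ = ε ^ 2 * (K * N * C / c ^ 2 * Real.exp (-a / ε)) := by ring
    _ ≤ 1 * (K * (N + 1) * C / c ^ 2 * Real.exp (-a / ε)) := by
        gcongr
        · exact pow_le_one₀ hε.le hε1.le
        · linarith
    _ = K * (N + 1) * C / c ^ 2 * Real.exp (-a / ε) := one_mul _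
end

section
/- Let σ > 0, τ > 0 and suppose g : ℝ → ℝ satisfies g(u) ≥ σ for all u. Let u be a smooth solution on [0,1]×[0,T] of τu_tt + g(u)u_t + ∫₀¹(1-g(u))u_t dx = ε²u_xx + f(u) - ∫₀¹f(u) dx with u_x(0,t) = u_x(1,t) = 0 and ∫₀¹ u_t(x,0) dx = 0, where f = -F'. Then d/dt E[u,u_t](t) ≤ -σ ∫₀¹ u_t(x,t)² dx, where E[u,u_t](t) = ∫₀¹ [τ/2 u_t² + ε²/2 u_x² + F(u)] dx. -/
open Set MeasureTheory intervalIntegral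

private lemma hasDerivAt_snd' {f : ℝ × ℝ → ℝ} (hf : Differentiable ℝ f) (x t : ℝ) :
    HasDerivAt (fun s => f (x, s)) (fderiv ℝ f (x, t) (0, 1)) t := by
  have h1 : HasDerivAt (fun s : ℝ => ((x : ℝ), s)) ((0 : ℝ), (1 : ℝ)) t :=
    (hasDerivAt_const t x).prodMk (hasDerivAt_id t)
  exact (hf (x, t)).hasFDerivAt.comp_hasDerivAt t h1

private lemma hasDerivAt_fst' {f : ℝ × ℝ → ℝ} (hf : Differentiable ℝ f) (x t : ℝ) :
    HasDerivAt (fun y => f (y, t)) (fderiv ℝ f (x, t) (1, 0)) x := by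
  have h1 : HasDerivAt (fun y : ℝ => (y, (t : ℝ))) ((1 : ℝ), (0 : ℝ)) x :=
    (hasDerivAt_id x).prodMk (hasDerivAt_const x t)
  exact (hf (x, t)).hasFDerivAt.comp_hasDerivAt x h1

private lemma mixed_partials_comm {f : ℝ × ℝ → ℝ} (hf : ContDiff ℝ (⊤ : ℕ∞) f) (p v w : ℝ × ℝ) :
    fderiv ℝ (fun q => fderiv ℝ f q v) p w = fderiv ℝ (fun q => fderiv ℝ f q w) p v := by
  have hdf : Differentiable ℝ (fderiv ℝ f) :=
    (hf.fderiv_right (m := (⊤ : ℕ∞)) (by simp)).differentiable (by simp)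
  have h1 : ∀ z v : ℝ × ℝ, fderiv ℝ (fun q => fderiv ℝ f q v) p z =
      fderiv ℝ (fderiv ℝ f) p z v := by
    intro z v
    rw [fderiv_clm_apply (hdf p) (differentiableAt_const v)]
    simp
  rw [h1, h1]
  exact second_derivative_symmetric (fun y => (hf.differentiable (by simp) y).hasFDerivAt)
    (hdf p).hasFDerivAt w v

private lemma hasDerivAt_intervalIntegral_param {Φ Φ' : ℝ → ℝ → ℝ}
    (hΦ : Continuous fun p : ℝ × ℝ => Φ p.1 p.2)
    (hΦ' : Continuous fun p : ℝ × ℝ => Φ' p.1 p.2)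
    (hd : ∀ x s, HasDerivAt (fun s' => Φ x s') (Φ' x s) s) (t : ℝ) :
    HasDerivAt (fun s => ∫ x in (0:ℝ)..1, Φ x s) (∫ x in (0:ℝ)..1, Φ' x t) t := by
  obtain ⟨C, hC⟩ := ((isCompact_Icc (a := (0:ℝ)) (b := 1)).prod
    (isCompact_Icc (a := t - 1) (b := t + 1))).exists_bound_of_continuousOn hΦ'.continuousOn
  have key := intervalIntegral.hasDerivAt_integral_of_dominated_loc_of_deriv_le
    (F := fun s x => Φ x s) (F' := fun s x => Φ' x s) (x₀ := t) (a := (0:ℝ)) (b := 1)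
    (bound := fun _ => C) (s := Metric.ball t 1) (μ := volume) (Metric.ball_mem_nhds t one_pos)
    (Filter.Eventually.of_forall fun s =>
      ((hΦ.comp (continuous_id.prodMk continuous_const)).aestronglyMeasurable))
    ((hΦ.comp (continuous_id.prodMk continuous_const)).intervalIntegrable 0 1)
    ((hΦ'.comp (continuous_id.prodMk continuous_const)).aestronglyMeasurable)
    (Filter.Eventually.of_forall fun x hx s hs => by
      have hx' : x ∈ Icc (0:ℝ) 1 := by
        rw [uIoc_of_le (by norm_num : (0:ℝ) ≤ 1)] at hx
        exact ⟨le_of_lt hx.1, hx.2⟩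
      have hs' : s ∈ Icc (t - 1) (t + 1) := by
        rw [Metric.mem_ball, Real.dist_eq, abs_sub_lt_iff] at hs
        constructor <;> linarith [hs.1, hs.2]
      exact hC (x, s) ⟨hx', hs'⟩)
    intervalIntegrable_const
    (Filter.Eventually.of_forall fun x _ s _ => hd x s)
  exact key.2

/-- Energy dissipation for the hyperbolic mass-conserving Allen–Cahn
equation: if `g ≥ σ > 0`, `u` is a smooth solution on `[0,1]×[0,T]` with homogeneous
Neumann boundary conditions and zero-mean initial velocity, then the energy
`E(t) = ∫₀¹ [τ/2 u_t² + ε²/2 u_x² + F(u)] dx` satisfies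
`E'(t) ≤ -σ ∫₀¹ u_t² dx`. -/
theorem stmt17 (σ τ ε T : ℝ) (hσ : 0 < σ) (hτ : 0 < τ) (hε : 0 < ε) (hT : 0 < T)
    (g F : ℝ → ℝ) (hg : ∀ s, σ ≤ g s) (hF : ContDiff ℝ 2 F)
    (u : ℝ → ℝ → ℝ)
    (hu : ContDiff ℝ (⊤ : ℕ∞) (fun p : ℝ × ℝ => u p.1 p.2))
    (hPDE : ∀ x ∈ Set.Icc (0:ℝ) 1, ∀ t ∈ Set.Icc (0:ℝ) T,
      τ * deriv (fun s => deriv (fun s' => u x s') s) t +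
        g (u x t) * deriv (fun s => u x s) t +
        (∫ y in (0:ℝ)..1, (1 - g (u y t)) * deriv (fun s => u y s) t) =
      ε ^ 2 * deriv (fun y => deriv (fun y' => u y' t) y) x +
        (-deriv F (u x t)) -
        (∫ y in (0:ℝ)..1, -deriv F (u y t)))
    (hBC : ∀ t ∈ Set.Icc (0:ℝ) T,
      deriv (fun y => u y t) 0 = 0 ∧ deriv (fun y => u y t) 1 = 0)
    (hIC : (∫ x in (0:ℝ)..1, deriv (fun s => u x s) 0) = 0) :
    ∀ t ∈ Set.Icc (0:ℝ) T,
      deriv (fun s => ∫ x in (0:ℝ)..1,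
          (τ / 2 * (deriv (fun s' => u x s') s) ^ 2 +
            ε ^ 2 / 2 * (deriv (fun y => u y s) x) ^ 2 + F (u x s))) t ≤
        -σ * ∫ x in (0:ℝ)..1, (deriv (fun s => u x s) t) ^ 2 := by
  intro t ht
  have hPd : Differentiable ℝ (fun p : ℝ × ℝ => u p.1 p.2) := hu.differentiable (by simp)
  set P : ℝ × ℝ → ℝ := fun p => u p.1 p.2 with hPdef
  set Q : ℝ × ℝ → ℝ := fun p => fderiv ℝ P p (0, 1) with hQdef
  set R : ℝ × ℝ → ℝ := fun p => fderiv ℝ P p (1, 0) with hRdef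
  have hQcd : ContDiff ℝ (⊤ : ℕ∞) Q := (hu.fderiv_right (by simp)).clm_apply contDiff_const
  have hRcd : ContDiff ℝ (⊤ : ℕ∞) R := (hu.fderiv_right (by simp)).clm_apply contDiff_const
  have hQd : Differentiable ℝ Q := hQcd.differentiable (by simp)
  have hRd : Differentiable ℝ R := hRcd.differentiable (by simp)
  set Qt : ℝ × ℝ → ℝ := fun p => fderiv ℝ Q p (0, 1) with hQtdef
  set Qx : ℝ × ℝ → ℝ := fun p => fderiv ℝ Q p (1, 0) with hQxdef
  set Rx : ℝ × ℝ → ℝ := fun p => fderiv ℝ R p (1, 0) with hRxdef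
  set Rt : ℝ × ℝ → ℝ := fun p => fderiv ℝ R p (0, 1) with hRtdef
  have hQtcd : ContDiff ℝ (⊤ : ℕ∞) Qt := (hQcd.fderiv_right (by simp)).clm_apply contDiff_const
  have hQxcd : ContDiff ℝ (⊤ : ℕ∞) Qx := (hQcd.fderiv_right (by simp)).clm_apply contDiff_const
  have hRxcd : ContDiff ℝ (⊤ : ℕ∞) Rx := (hRcd.fderiv_right (by simp)).clm_apply contDiff_const
  have hRtcd : ContDiff ℝ (⊤ : ℕ∞) Rt := (hRcd.fderiv_right (by simp)).clm_apply contDiff_const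
  have hsymm : Rt = Qx := by
    funext p
    rw [hRtdef, hQxdef, hRdef, hQdef]
    exact mixed_partials_comm hu p (1, 0) (0, 1)
  -- basic derivative facts
  have hut : ∀ x s, HasDerivAt (fun s' => u x s') (Q (x, s)) s := fun x s =>
    hasDerivAt_snd' hPd x s
  have hux : ∀ x s, HasDerivAt (fun y => u y s) (R (x, s)) x := fun x s =>
    hasDerivAt_fst' hPd x s
  have hderiv_ut : ∀ x s, deriv (fun s' => u x s') s = Q (x, s) := fun x s => (hut x s).deriv
  have hderiv_ux : ∀ x s, deriv (fun y => u y s) x = R (x, s) := fun x s => (hux x s).deriv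
  have hutt : ∀ x s, HasDerivAt (fun s' => Q (x, s')) (Qt (x, s)) s := fun x s =>
    hasDerivAt_snd' hQd x s
  have hqx : ∀ x s, HasDerivAt (fun y => Q (y, s)) (Qx (x, s)) x := fun x s =>
    hasDerivAt_fst' hQd x s
  have hrx : ∀ x s, HasDerivAt (fun y => R (y, s)) (Rx (x, s)) x := fun x s =>
    hasDerivAt_fst' hRd x s
  have hrt : ∀ x s, HasDerivAt (fun s' => R (x, s')) (Rt (x, s)) s := fun x s =>
    hasDerivAt_snd' hRd x s
  have hderiv_utt : ∀ x s, deriv (fun s' => deriv (fun s'' => u x s'') s') s = Qt (x, s) := by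
    intro x s
    have : (fun s' => deriv (fun s'' => u x s'') s') = fun s' => Q (x, s') :=
      funext fun s' => hderiv_ut x s'
    rw [this]
    exact (hutt x s).deriv
  have hderiv_uxx : ∀ x s, deriv (fun y => deriv (fun y' => u y' s) y) x = Rx (x, s) := by
    intro x s
    have : (fun y => deriv (fun y' => u y' s) y) = fun y => R (y, s) :=
      funext fun y => hderiv_ux y s
    rw [this]
    exact (hrx x s).deriv
  have hderiv_Qt : ∀ x s, deriv (fun s' => Q (x, s')) s = Qt (x, s) := fun x s =>
    (hutt x s).deriv
  have hderiv_Rx : ∀ x s, deriv (fun y => R (y, s)) x = Rx (x, s) := fun x s =>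
    (hrx x s).deriv
  -- continuity facts
  have hFd : Differentiable ℝ F := hF.differentiable (by norm_num)
  have hF'c : Continuous (deriv F) := hF.continuous_deriv one_le_two
  have hPc : Continuous P := hu.continuous
  have hQc : Continuous Q := hQcd.continuous
  have hRc : Continuous R := hRcd.continuous
  have hQtc : Continuous Qt := hQtcd.continuous
  have hQxc : Continuous Qx := hQxcd.continuous
  have hRxc : Continuous Rx := hRxcd.continuous
  have hRtc : Continuous Rt := hRtcd.continuous
  have hcu : ∀ s, Continuous fun x : ℝ => u x s := fun s =>
    hPc.comp (continuous_id.prodMk continuous_const)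
  have hcQ : ∀ s, Continuous fun x : ℝ => Q (x, s) := fun s =>
    hQc.comp (continuous_id.prodMk continuous_const)
  have hcR : ∀ s, Continuous fun x : ℝ => R (x, s) := fun s =>
    hRc.comp (continuous_id.prodMk continuous_const)
  have hcQt : ∀ s, Continuous fun x : ℝ => Qt (x, s) := fun s =>
    hQtc.comp (continuous_id.prodMk continuous_const)
  have hcQx : ∀ s, Continuous fun x : ℝ => Qx (x, s) := fun s =>
    hQxc.comp (continuous_id.prodMk continuous_const)
  have hcRx : ∀ s, Continuous fun x : ℝ => Rx (x, s) := fun s =>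
    hRxc.comp (continuous_id.prodMk continuous_const)
  have hcRt : ∀ s, Continuous fun x : ℝ => Rt (x, s) := fun s =>
    hRtc.comp (continuous_id.prodMk continuous_const)
  have hcF' : ∀ s, Continuous fun x : ℝ => deriv F (u x s) := fun s =>
    hF'c.comp (hcu s)
  -- auxiliary integral quantities
  set A : ℝ → ℝ := fun s => ∫ y in (0:ℝ)..1, -deriv F (u y s) with hAdef
  set J : ℝ → ℝ := fun s => ∫ y in (0:ℝ)..1, (1 - g (u y s)) * Q (y, s) with hJdef
  set m : ℝ → ℝ := fun s => ∫ x in (0:ℝ)..1, Q (x, s) with hmdef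
  -- the PDE, restated
  have hPDE' : ∀ x ∈ Icc (0:ℝ) 1, ∀ s ∈ Icc (0:ℝ) T,
      τ * Qt (x, s) + g (u x s) * Q (x, s) + J s
        = ε ^ 2 * Rx (x, s) + (-deriv F (u x s)) - A s := by
    intro x hx s hs
    have h0 := hPDE x hx s hs
    simp only [hderiv_ut, hderiv_Qt, hderiv_uxx] at h0
    simpa only [hJdef, hAdef] using h0
  -- continuity of x ↦ g(u x s) * Q (x,s) on [0,1], for s ∈ [0,T]
  have hgQ : ∀ s ∈ Icc (0:ℝ) T, ContinuousOn (fun x => g (u x s) * Q (x, s)) (Icc 0 1) := by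
    intro s hs
    have hw : Continuous (fun x =>
        ε ^ 2 * Rx (x, s) + (-deriv F (u x s)) - A s - τ * Qt (x, s) - J s) :=
      ((((continuous_const.mul (hcRx s)).add (hcF' s).neg).sub continuous_const).sub
        (continuous_const.mul (hcQt s))).sub continuous_const
    apply hw.continuousOn.congr
    intro x hx
    have := hPDE' x hx s hs
    dsimp only
    linarith
  have hgQi : ∀ s ∈ Icc (0:ℝ) T,
      IntervalIntegrable (fun x => g (u x s) * Q (x, s)) volume 0 1 := by
    intro s hs
    exact ((hgQ s hs).mono (by rw [uIcc_of_le zero_le_one])).intervalIntegrable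
  have hgQQi : ∀ s ∈ Icc (0:ℝ) T,
      IntervalIntegrable (fun x => g (u x s) * Q (x, s) * Q (x, s)) volume 0 1 := by
    intro s hs
    exact ((((hgQ s hs).mul
      ((hQc.comp (continuous_id.prodMk continuous_const)).continuousOn)).mono
      (by rw [uIcc_of_le zero_le_one]))).intervalIntegrable
  have h1gQi : ∀ s ∈ Icc (0:ℝ) T,
      IntervalIntegrable (fun x => (1 - g (u x s)) * Q (x, s)) volume 0 1 := by
    intro s hs
    have : ContinuousOn (fun x => Q (x, s) - g (u x s) * Q (x, s)) (Icc 0 1) :=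
      ((hQc.comp (continuous_id.prodMk continuous_const)).continuousOn).sub (hgQ s hs)
    refine ((this.congr ?_).mono (by rw [uIcc_of_le zero_le_one])).intervalIntegrable
    intro x hx
    dsimp only
    ring
  -- mass: J s + ∫ gQ = m s
  have hmass : ∀ s ∈ Icc (0:ℝ) T,
      (∫ x in (0:ℝ)..1, g (u x s) * Q (x, s)) + J s = m s := by
    intro s hs
    rw [hJdef, hmdef]
    rw [← intervalIntegral.integral_add (hgQi s hs) (h1gQi s hs)]
    apply intervalIntegral.integral_congr
    intro x hx
    dsimp only
    ring
  -- derivative of m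
  have hm' : ∀ s, HasDerivAt m (∫ x in (0:ℝ)..1, Qt (x, s)) s := by
    intro s
    rw [hmdef]
    exact hasDerivAt_intervalIntegral_param (Φ := fun x s => Q (x, s))
      (Φ' := fun x s => Qt (x, s)) hQc hQtc (fun x s => hutt x s) s
  -- the ODE for m on [0,T]
  have hODE : ∀ s ∈ Icc (0:ℝ) T, τ * (∫ x in (0:ℝ)..1, Qt (x, s)) = - m s := by
    intro s hs
    have e1 : ∫ x in (0:ℝ)..1, τ * Qt (x, s)
        = ∫ x in (0:ℝ)..1,
          ((ε ^ 2 * Rx (x, s) + (-deriv F (u x s)) - A s - J s) - g (u x s) * Q (x, s)) := by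
      apply intervalIntegral.integral_congr
      intro x hx
      rw [uIcc_of_le zero_le_one] at hx
      have := hPDE' x hx s hs
      dsimp only
      linarith
    have iX : IntervalIntegrable
        (fun x => ε ^ 2 * Rx (x, s) + (-deriv F (u x s)) - A s - J s) volume 0 1 :=
      ((((continuous_const.mul (hcRx s)).add (hcF' s).neg).sub continuous_const).sub
        continuous_const).intervalIntegrable 0 1
    have e2 : ∫ x in (0:ℝ)..1,
          ((ε ^ 2 * Rx (x, s) + (-deriv F (u x s)) - A s - J s) - g (u x s) * Q (x, s))
        = (∫ x in (0:ℝ)..1, (ε ^ 2 * Rx (x, s) + (-deriv F (u x s)) - A s - J s))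
          - ∫ x in (0:ℝ)..1, g (u x s) * Q (x, s) :=
      intervalIntegral.integral_sub iX (hgQi s hs)
    have eRx : ∫ x in (0:ℝ)..1, Rx (x, s) = R (1, s) - R (0, s) :=
      intervalIntegral.integral_eq_sub_of_hasDerivAt (fun x _ => hrx x s)
        ((hcRx s).intervalIntegrable 0 1)
    have hR0 : R (0, s) = 0 := by rw [← hderiv_ux 0 s]; exact (hBC s hs).1
    have hR1 : R (1, s) = 0 := by rw [← hderiv_ux 1 s]; exact (hBC s hs).2
    have e3 : ∫ x in (0:ℝ)..1, (ε ^ 2 * Rx (x, s) + (-deriv F (u x s)) - A s - J s)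
        = - J s := by
      rw [intervalIntegral.integral_sub
          ((((continuous_const.fun_mul (hcRx s)).fun_add (hcF' s).fun_neg).fun_sub
            continuous_const).intervalIntegrable 0 1) intervalIntegrable_const,
        intervalIntegral.integral_sub
          (((continuous_const.fun_mul (hcRx s)).fun_add (hcF' s).fun_neg).intervalIntegrable 0 1)
          intervalIntegrable_const,
        intervalIntegral.integral_add
          ((continuous_const.fun_mul (hcRx s)).intervalIntegrable 0 1)
          ((hcF' s).fun_neg.intervalIntegrable 0 1),
        intervalIntegral.integral_const_mul, eRx, hR0, hR1]
      have : (∫ x in (0:ℝ)..1, -deriv F (u x s)) = A s := by rw [hAdef]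
      rw [this]
      simp
    have e4 : ∫ x in (0:ℝ)..1, τ * Qt (x, s) = τ * ∫ x in (0:ℝ)..1, Qt (x, s) :=
      intervalIntegral.integral_const_mul _ _
    have := hmass s hs
    rw [← e4, e1, e2, e3]
    linarith
  -- m ≡ 0 on [0,T] via Gronwall
  have hm0 : m 0 = 0 := by
    have e : (∫ x in (0:ℝ)..1, Q (x, 0)) = ∫ x in (0:ℝ)..1, deriv (fun s => u x s) 0 :=
      intervalIntegral.integral_congr fun x _ => (hderiv_ut x 0).symm
    show (∫ x in (0:ℝ)..1, Q (x, 0)) = 0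
    rw [e]
    exact hIC
  have hmzero : ∀ s ∈ Icc (0:ℝ) T, m s = 0 := by
    intro s hs
    have hcont : ContinuousOn m (Icc 0 T) :=
      (continuous_iff_continuousAt.2 fun z => (hm' z).continuousAt).continuousOn
    have hder : ∀ z ∈ Ico (0:ℝ) T, HasDerivWithinAt m (∫ x in (0:ℝ)..1, Qt (x, z)) (Ici z) z :=
      fun z _ => (hm' z).hasDerivWithinAt
    have hb : ∀ z ∈ Ico (0:ℝ) T,
        ‖∫ x in (0:ℝ)..1, Qt (x, z)‖ ≤ (1 / τ) * ‖m z‖ + 0 := by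
      intro z hz
      have h5 := hODE z ⟨hz.1, le_of_lt hz.2⟩
      have h6 : (∫ x in (0:ℝ)..1, Qt (x, z)) = - m z / τ := by
        rw [eq_div_iff hτ.ne']
        linarith
      rw [h6]
      have e7 : ‖- m z / τ‖ = 1 / τ * ‖m z‖ := by
        rw [Real.norm_eq_abs, Real.norm_eq_abs, abs_div, abs_neg, abs_of_pos hτ]
        ring
      rw [e7, add_zero]
    have key := norm_le_gronwallBound_of_norm_deriv_right_le (δ := 0) (K := 1/τ) (ε := 0) hcont hder
      (by simp [hm0]) hb s hs
    rw [gronwallBound_ε0] at key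
    have h8 : ‖m s‖ ≤ 0 := by simpa using key
    have h9 := le_antisymm h8 (norm_nonneg _)
    simpa using h9
  -- Energy derivative
  simp only [hderiv_ut, hderiv_ux]
  have hE : HasDerivAt
      (fun s => ∫ x in (0:ℝ)..1,
        (τ / 2 * Q (x, s) ^ 2 + ε ^ 2 / 2 * R (x, s) ^ 2 + F (u x s)))
      (∫ x in (0:ℝ)..1,
        (τ * (Q (x, t) * Qt (x, t)) + ε ^ 2 * (R (x, t) * Rt (x, t))
          + deriv F (u x t) * Q (x, t))) t := by
    apply hasDerivAt_intervalIntegral_param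
      (Φ := fun x s => τ / 2 * Q (x, s) ^ 2 + ε ^ 2 / 2 * R (x, s) ^ 2 + F (u x s))
      (Φ' := fun x s => τ * (Q (x, s) * Qt (x, s)) + ε ^ 2 * (R (x, s) * Rt (x, s))
        + deriv F (u x s) * Q (x, s))
    · exact ((continuous_const.mul (hQc.pow 2)).add
        (continuous_const.mul (hRc.pow 2))).add (hF.continuous.comp hPc)
    · exact ((continuous_const.mul (hQc.mul hQtc)).add
        (continuous_const.mul (hRc.mul hRtc))).add ((hF'c.comp hPc).mul hQc)
    · intro x s
      have h1 : HasDerivAt (fun s' => Q (x, s') ^ 2) (2 * Q (x, s) * Qt (x, s)) s := by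
        simpa using (hutt x s).fun_pow 2
      have h2 : HasDerivAt (fun s' => R (x, s') ^ 2) (2 * R (x, s) * Rt (x, s)) s := by
        simpa using (hrt x s).fun_pow 2
      have h3 : HasDerivAt (fun s' => F (u x s')) (deriv F (u x s) * Q (x, s)) s :=
        (hFd (u x s)).hasDerivAt.comp s (hut x s)
      have h4 := ((HasDerivAt.const_mul (τ / 2) h1).fun_add
        (HasDerivAt.const_mul (ε ^ 2 / 2) h2)).fun_add h3
      exact h4.congr_deriv (by ring)
  rw [hE.deriv]
  set K : ℝ := A t + J t with hKdef
  have e10 : (∫ x in (0:ℝ)..1, (τ * (Q (x, t) * Qt (x, t)) + ε ^ 2 * (R (x, t) * Rt (x, t))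
          + deriv F (u x t) * Q (x, t)))
      = ∫ x in (0:ℝ)..1,
        ((ε ^ 2 * (Q (x, t) * Rx (x, t) + R (x, t) * Rt (x, t)) - K * Q (x, t))
          + (-(g (u x t) * Q (x, t) * Q (x, t)))) := by
    apply intervalIntegral.integral_congr
    intro x hx
    rw [uIcc_of_le zero_le_one] at hx
    have hp := hPDE' x hx t ht
    dsimp only
    rw [hKdef]
    linear_combination Q (x, t) * hp
  have iX2 : IntervalIntegrable
      (fun x => ε ^ 2 * (Q (x, t) * Rx (x, t) + R (x, t) * Rt (x, t)) - K * Q (x, t))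
      volume 0 1 :=
    ((continuous_const.mul (((hcQ t).mul (hcRx t)).add ((hcR t).mul (hcRt t)))).sub
      (continuous_const.mul (hcQ t))).intervalIntegrable 0 1
  have iY2 : IntervalIntegrable (fun x => -(g (u x t) * Q (x, t) * Q (x, t))) volume 0 1 :=
    (hgQQi t ht).neg
  rw [e10, intervalIntegral.integral_add iX2 iY2]
  have eQRxRt : ∫ x in (0:ℝ)..1, (Q (x, t) * Rx (x, t) + R (x, t) * Rt (x, t)) = 0 := by
    have ftc : ∫ x in (0:ℝ)..1, (Qx (x, t) * R (x, t) + Q (x, t) * Rx (x, t))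
        = Q (1, t) * R (1, t) - Q (0, t) * R (0, t) :=
      intervalIntegral.integral_eq_sub_of_hasDerivAt
        (fun x _ => (hqx x t).mul (hrx x t))
        ((((hcQx t).mul (hcR t)).add ((hcQ t).mul (hcRx t))).intervalIntegrable 0 1)
    have hR0 : R (0, t) = 0 := by rw [← hderiv_ux 0 t]; exact (hBC t ht).1
    have hR1 : R (1, t) = 0 := by rw [← hderiv_ux 1 t]; exact (hBC t ht).2
    have ecg : ∫ x in (0:ℝ)..1, (Q (x, t) * Rx (x, t) + R (x, t) * Rt (x, t))
        = ∫ x in (0:ℝ)..1, (Qx (x, t) * R (x, t) + Q (x, t) * Rx (x, t)) := by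
      apply intervalIntegral.integral_congr
      intro x _
      dsimp only
      rw [hsymm]
      ring
    rw [ecg, ftc, hR0, hR1]
    ring
  have hmt : (∫ x in (0:ℝ)..1, Q (x, t)) = 0 := hmzero t ht
  have eX : ∫ x in (0:ℝ)..1,
      (ε ^ 2 * (Q (x, t) * Rx (x, t) + R (x, t) * Rt (x, t)) - K * Q (x, t)) = 0 := by
    rw [intervalIntegral.integral_sub
        ((continuous_const.fun_mul (((hcQ t).fun_mul (hcRx t)).fun_add
          ((hcR t).fun_mul (hcRt t)))).intervalIntegrable 0 1)
        ((continuous_const.fun_mul (hcQ t)).intervalIntegrable 0 1),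
      intervalIntegral.integral_const_mul, intervalIntegral.integral_const_mul,
      eQRxRt, hmt]
    ring
  rw [eX, zero_add]
  have mono : σ * (∫ x in (0:ℝ)..1, Q (x, t) ^ 2)
      ≤ ∫ x in (0:ℝ)..1, g (u x t) * Q (x, t) * Q (x, t) := by
    rw [← intervalIntegral.integral_const_mul]
    apply intervalIntegral.integral_mono_on zero_le_one
      ((continuous_const.fun_mul ((hcQ t).fun_pow 2)).intervalIntegrable 0 1) (hgQQi t ht)
    intro x _
    have := hg (u x t)
    nlinarith [sq_nonneg (Q (x, t))]
  rw [intervalIntegral.integral_neg]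
  linarith
end
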